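/- Let Σ be a finite alphabet with at least two elements and let θ be a primitive substitution on Σ. Then the language F[θ] is subexponentially growing: for every real number b > 1, the quotient β_{F[θ]}(n)/b^n tends to 0 as n → ∞. -/

import Mathlib

/-- The extension of a substitution `θ` to finite words, by concatenation:
`θ(w₁…w_m) = θ(w₁)…θ(w_m)`. -/
def substWord {α : Type*} (θ : α → List α) : List α → List α :=
  fun w => w.foldr (fun a acc => θ a ++ acc) []

/-- `θ` is a substitution: every letter maps to a nonempty word. -/
def IsSubstitution {α : Type*} (θ : α → List α) : Prop := ∀ a, θ a ≠ []

/-- `θ` is primitive: there is `k ≥ 1` such that for all letters `a, b`,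
the letter `b` occurs in `θ^k(a)`. -/
def IsPrimitiveSubst {α : Type*} (θ : α → List α) : Prop :=
  ∃ k, 1 ≤ k ∧ ∀ a b : α, b ∈ (substWord θ)^[k] [a]

/-- The language `F[θ]`: all nonempty factors (contiguous subwords) of the words
`θ^m(a)`, over all `m ≥ 1` and letters `a`. -/
def substLang {α : Type*} (θ : α → List α) : Set (List α) :=
  {w | w ≠ [] ∧ ∃ m, 1 ≤ m ∧ ∃ a : α, w <:+: (substWord θ)^[m] [a]}

/-
By primitivity every letter occurs in every `θ^k(a)`; with at least two letters this gives
`|θ^(kj)(a)| ≥ 2^j`. As `a` occurs in `θ^k(a)`, every word of `F[θ]` is a factor of some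
`θ^(kj)(θ^m(a))`, and if its length is at most `2^j` it meets at most two of the blocks
`θ^(kj)(c)`, so it is a factor of `θ^(kj)(x)` for a word `x` of length at most `2`.
Choosing `2^j` between `n` and `2n` and bounding `|θ a| ≤ 2^e` leaves at most
`(3 (2n)^(ek))^2` factors for each `x`, so `β(n)` grows polynomially.
-/

open Filter Asymptotics

namespace List

variable {α : Type*}

theorem setOf_infix_subset_image (v : List α) :
    {w | w <:+: v} ⊆
      (fun p : ℕ × ℕ => (v.drop p.1).take p.2) '' (Set.Iic v.length ×ˢ Set.Iic v.length) := by
  rintro w ⟨s, t, rfl⟩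
  refine ⟨(s.length, w.length), ⟨?_, ?_⟩, ?_⟩
  · simp only [Set.mem_Iic, length_append]; omega
  · simp only [Set.mem_Iic, length_append]; omega
  · simp [List.append_assoc]

theorem finite_setOf_infix (v : List α) : {w | w <:+: v}.Finite :=
  (((Set.finite_Iic _).prod (Set.finite_Iic _)).image _).subset (setOf_infix_subset_image v)

theorem ncard_setOf_infix_le (v : List α) : {w | w <:+: v}.ncard ≤ (v.length + 1) ^ 2 := by
  have hfin := (Set.finite_Iic v.length).prod (Set.finite_Iic v.length)
  calc {w | w <:+: v}.ncard ≤ _ := Set.ncard_le_ncard (setOf_infix_subset_image v) (hfin.image _)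
    _ ≤ _ := Set.ncard_image_le hfin
    _ = (v.length + 1) ^ 2 := by rw [Set.ncard_prod, Set.ncard_Iic_nat, sq]

end List

section Substitution

variable {α : Type*} (θ : α → List α)

theorem substWord_eq_flatMap (w : List α) : substWord θ w = w.flatMap θ := by
  induction w with
  | nil => rfl
  | cons a w ih => simp [substWord, ← ih]

@[simp] theorem substWord_nil : substWord θ [] = [] := rfl

@[simp] theorem substWord_cons (a : α) (w : List α) :
    substWord θ (a :: w) = θ a ++ substWord θ w := rfl

@[simp] theorem substWord_singleton (a : α) : substWord θ [a] = θ a := by simp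

@[simp] theorem substWord_append (v w : List α) :
    substWord θ (v ++ w) = substWord θ v ++ substWord θ w := by
  simp [substWord_eq_flatMap]

theorem iterate_substWord (k : ℕ) (w : List α) :
    (substWord θ)^[k] w = substWord (fun a => (substWord θ)^[k] [a]) w := by
  induction k generalizing w with
  | zero => simp [substWord_eq_flatMap]
  | succ k ih =>
    rw [Function.iterate_succ_apply, ih, substWord_eq_flatMap, substWord_eq_flatMap,
      substWord_eq_flatMap, List.flatMap_assoc]
    congr 1
    funext a
    rw [Function.iterate_succ_apply, ih, substWord_singleton, substWord_eq_flatMap]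

variable {θ}

theorem List.IsInfix.substWord {v w : List α} (h : v <:+: w) :
    _root_.substWord θ v <:+: _root_.substWord θ w := by
  obtain ⟨s, t, rfl⟩ := h
  exact ⟨_root_.substWord θ s, _root_.substWord θ t, by simp⟩

theorem List.IsInfix.iterate_substWord {v w : List α} (h : v <:+: w) (j : ℕ) :
    (_root_.substWord θ)^[j] v <:+: (_root_.substWord θ)^[j] w := by
  induction j with
  | zero => exact h
  | succ j ih => simpa only [Function.iterate_succ_apply'] using ih.substWord

theorem infix_iterate_mul_of_infix {w : List α} {k : ℕ} (h : w <:+: (substWord θ)^[k] w)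
    (i : ℕ) : w <:+: (substWord θ)^[k * i] w := by
  induction i with
  | zero => exact List.infix_rfl
  | succ i ih =>
    rw [Nat.mul_succ, Function.iterate_add_apply]
    exact ih.trans (h.iterate_substWord _)

theorem length_substWord_le {M : ℕ} (hM : ∀ a, (θ a).length ≤ M) (w : List α) :
    (substWord θ w).length ≤ M * w.length := by
  induction w with
  | nil => simp
  | cons a w ih => simp only [substWord_cons, List.length_append, List.length_cons]; grind

theorem le_length_substWord {m : ℕ} (hm : ∀ a, m ≤ (θ a).length) (w : List α) :
    m * w.length ≤ (substWord θ w).length := by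
  induction w with
  | nil => simp
  | cons a w ih => simp only [substWord_cons, List.length_append, List.length_cons]; grind

theorem length_iterate_substWord_le {M : ℕ} (hM : ∀ a, (θ a).length ≤ M) (j : ℕ)
    (w : List α) : ((substWord θ)^[j] w).length ≤ M ^ j * w.length := by
  induction j generalizing w with
  | zero => simp
  | succ j ih =>
    rw [Function.iterate_succ_apply, pow_succ, mul_assoc]
    exact (ih _).trans (Nat.mul_le_mul_left _ (length_substWord_le hM w))

theorem le_length_iterate_substWord {m : ℕ} (hm : ∀ a, m ≤ (θ a).length) (j : ℕ)
    (w : List α) : m ^ j * w.length ≤ ((substWord θ)^[j] w).length := by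
  induction j generalizing w with
  | zero => simp
  | succ j ih =>
    rw [Function.iterate_succ_apply, pow_succ, mul_assoc]
    exact (Nat.mul_le_mul_left _ (le_length_substWord hm w)).trans (ih _)

theorem exists_infix_of_infix_substWord {w : List α} (hw : ∀ a, w.length ≤ (θ a).length) :
    ∀ {u : List α}, w <:+: substWord θ u →
      ∃ x, x <:+: u ∧ x.length ≤ 2 ∧ w <:+: substWord θ x
  | [], h => ⟨[], List.infix_rfl, by simp, h⟩
  | a :: u, h => by
    rcases List.infix_append_iff.mp h with h | h | ⟨s, p, rfl, hs, hp⟩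
    · exact ⟨[a], List.infix_append_left, by simp, by simpa using h⟩
    · obtain ⟨x, hxu, hx, hwx⟩ := exists_infix_of_infix_substWord hw h
      exact ⟨x, hxu.trans (List.suffix_cons a u).isInfix, hx, hwx⟩
    · cases u with
      | nil =>
        obtain rfl : p = [] := by simpa using hp
        exact ⟨[a], List.infix_rfl, by simp, by simpa using hs.isInfix⟩
      | cons b u =>
        have hpb : p <+: θ b := List.prefix_of_prefix_length_le
          (by simpa using hp) (List.prefix_append _ _) (by simpa using (hw b).trans' (by simp))
        refine ⟨[a, b], List.infix_append_left (l₂ := u), by simp, ?_⟩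
        exact List.infix_append_iff.mpr (Or.inr (Or.inr ⟨s, p, rfl, hs, by simpa using hpb⟩))

end Substitution

section Primitive

variable {A : Type*} [Fintype A] {θ : A → List A} {k : ℕ}
  (hk : ∀ a b, b ∈ (substWord θ)^[k] [a])
include hk

theorem card_le_length_iterate_substWord (a : A) :
    Fintype.card A ≤ ((substWord θ)^[k] [a]).length := by
  classical
  calc Fintype.card A = (Finset.univ : Finset A).card := rfl
    _ ≤ ((substWord θ)^[k] [a]).toFinset.card :=
        Finset.card_le_card fun b _ => List.mem_toFinset.mpr (hk a b)
    _ ≤ _ := List.toFinset_card_le _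

theorem card_pow_le_length_iterate_substWord (j : ℕ) (a : A) :
    Fintype.card A ^ j ≤ ((substWord θ)^[k * j] [a]).length := by
  rw [Function.iterate_mul, funext (iterate_substWord θ k)]
  simpa using le_length_iterate_substWord (card_le_length_iterate_substWord hk) j [a]

theorem substLang_length_le_subset (hA : 2 ≤ Fintype.card A) (j : ℕ) :
    {w ∈ substLang θ | w.length ≤ 2 ^ j} ⊆
      ⋃ x ∈ {x : List A | x.length ≤ 2}, {w | w <:+: (substWord θ)^[k * j] x} := by
  rintro w ⟨⟨-, m, -, a, hw⟩, hlen⟩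
  have hpump : (substWord θ)^[m] [a] <:+: (substWord θ)^[k * j] ((substWord θ)^[m] [a]) := by
    rw [← Function.iterate_add_apply, Nat.add_comm, Function.iterate_add_apply]
    have ha : [a] <:+: (substWord θ)^[k] [a] := (List.singleton_infix_iff _ _).mpr (hk a a)
    exact (infix_iterate_mul_of_infix ha j).iterate_substWord m
  rw [iterate_substWord θ (k * j)] at hpump
  obtain ⟨x, -, hx, hwx⟩ := exists_infix_of_infix_substWord
    (fun c => hlen.trans ((Nat.pow_le_pow_left hA j).trans
      (card_pow_le_length_iterate_substWord hk j c))) (hw.trans hpump)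
  simp only [Set.mem_iUnion, Set.mem_ofPred_eq]
  exact ⟨x, hx, by rwa [iterate_substWord]⟩

theorem ncard_substLang_length_le (hA : 2 ≤ Fintype.card A) {e : ℕ}
    (he : ∀ a, (θ a).length ≤ 2 ^ e) {n : ℕ} (hn : n ≠ 0) :
    {w ∈ substLang θ | w.length ≤ n}.ncard ≤
      {x : List A | x.length ≤ 2}.ncard * (3 * (2 * n) ^ (e * k)) ^ 2 := by
  set j := Nat.log 2 n + 1
  have hnj : n ≤ 2 ^ j := (Nat.lt_pow_succ_log_self one_lt_two n).le
  have hjn : 2 ^ j ≤ 2 * n := by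
    rw [pow_succ, mul_comm]
    exact Nat.mul_le_mul_left 2 (Nat.pow_log_le_self 2 hn)
  have hX := List.finite_length_le A 2
  have hfactors : ∀ x ∈ hX.toFinset,
      {w | w <:+: (substWord θ)^[k * j] x}.ncard ≤ (3 * (2 * n) ^ (e * k)) ^ 2 := by
    intro x hx
    refine (List.ncard_setOf_infix_le _).trans (Nat.pow_le_pow_left ?_ 2)
    have hlen := length_iterate_substWord_le he (k * j) x
    have hpow : (2 ^ e) ^ (k * j) ≤ (2 * n) ^ (e * k) :=
      calc (2 ^ e) ^ (k * j) = (2 ^ j) ^ (e * k) := by rw [← pow_mul, ← pow_mul]; ring_nf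
        _ ≤ _ := Nat.pow_le_pow_left hjn _
    have hone : 1 ≤ (2 * n) ^ (e * k) := Nat.one_le_pow _ _ (by omega)
    have hx2 : x.length ≤ 2 := by simpa using hx
    nlinarith
  calc {w ∈ substLang θ | w.length ≤ n}.ncard
      ≤ (⋃ x ∈ hX.toFinset, {w | w <:+: (substWord θ)^[k * j] x}).ncard := by
        refine Set.ncard_le_ncard (fun w hw => ?_)
          (hX.toFinset.finite_toSet.biUnion fun x _ => List.finite_setOf_infix _)
        simpa using substLang_length_le_subset hk hA j ⟨hw.1, hw.2.trans hnj⟩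
    _ ≤ ∑ x ∈ hX.toFinset, {w | w <:+: (substWord θ)^[k * j] x}.ncard :=
        hX.toFinset.set_ncard_biUnion_le _
    _ ≤ ∑ _x ∈ hX.toFinset, (3 * (2 * n) ^ (e * k)) ^ 2 := Finset.sum_le_sum hfactors
    _ = _ := by rw [Finset.sum_const, smul_eq_mul, Set.ncard_eq_toFinset_card _ hX]

end Primitive

theorem stmt_2_general {A : Type*} [Fintype A] (hA : 2 ≤ Fintype.card A)
    (θ : A → List A) (hprim : IsPrimitiveSubst θ) :
    ∀ b : ℝ, 1 < b →
      Tendsto (fun n : ℕ => (({w ∈ substLang θ | w.length ≤ n}).ncard : ℝ) / b ^ n)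
        atTop (nhds 0) := by
  obtain ⟨k, -, hk⟩ := hprim
  obtain ⟨e, he⟩ : ∃ e, ∀ a, (θ a).length ≤ 2 ^ e :=
    ⟨∑ a, (θ a).length, fun a =>
      (Finset.single_le_sum (f := fun a => (θ a).length) (fun _ _ => Nat.zero_le _)
        (Finset.mem_univ a)).trans Nat.lt_two_pow_self.le⟩
  intro b hb
  have hpoly : (fun n : ℕ => (({w ∈ substLang θ | w.length ≤ n}).ncard : ℝ)) =O[atTop]
      fun n => (n : ℝ) ^ (2 * (e * k)) := by
    refine IsBigO.of_bound ({x : List A | x.length ≤ 2}.ncard * (3 * 2 ^ (e * k)) ^ 2) ?_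
    filter_upwards [eventually_ne_atTop 0] with n hn
    have hbound : (({w ∈ substLang θ | w.length ≤ n}).ncard : ℝ) ≤
        {x : List A | x.length ≤ 2}.ncard * (3 * (2 * n) ^ (e * k)) ^ 2 := by
      exact_mod_cast ncard_substLang_length_le hk hA he hn
    simp only [Real.norm_natCast, norm_pow]
    convert hbound using 1
    ring
  exact (hpoly.trans_isLittleO (isLittleO_pow_const_const_pow_of_one_lt _ hb)).tendsto_div_nhds_zero

/-- For a primitive substitution on a finite alphabet with at least two letters, the
language `F[θ]` is subexponentially growing: for every real `b > 1`,
`β_{F[θ]}(n) / bⁿ → 0` as `n → ∞`. -/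
theorem stmt_2 {A : Type*} [Fintype A] (hA : 2 ≤ Fintype.card A)
    (θ : A → List A) (hsub : IsSubstitution θ) (hprim : IsPrimitiveSubst θ) :
    ∀ b : ℝ, 1 < b →
      Tendsto (fun n : ℕ => (({w ∈ substLang θ | w.length ≤ n}).ncard : ℝ) / b ^ n)
        atTop (nhds 0) :=
  stmt_2_general hA θ hprim
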